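/- arXiv:2002.11875 — 3 statements merged into one kernel-verified Lean document; each statement's English description precedes it below -/
import Mathlib

section
/- Let X ⊆ ℝ^n and Y ⊆ ℝ^m be nonempty and f : ℝ^n × ℝ^m → ℝ. A pair (x*,y*) ∈ X × Y is a local minimax point of f if and only if (i) y* is a local maximizer of y ↦ f(x*,y) on Y, and (ii) there exists ε₀ > 0 such that for every ε ∈ (0, ε₀], x* is a local minimizer on X of the local upper envelope f̄_{ε,y*}. -/
/-!
If `y*` maximizes `f(x*, ·)` on `Y ∩ B̄(y*, ε₁)`, then every envelope `f̄_{ε,y*}` with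
`0 ≤ ε ≤ ε₁` takes the same value `f(x*, y*)` at `x*`, while `f̄_{ε,y*}(x)` grows with `ε`.
Hence local minimality of `x*` for one `ε'` passes to every `ε ∈ [ε', ε₁]`, which turns a
sequence `ε_n → 0` into a whole interval `(0, ε₀]`; conversely, any sequence in `(0, ε₀)`
tending to `0` witnesses the sequential definition.
-/

open Filter

/-- Local upper envelope `f̄_{ε,y*}` relative to `Y`, in the extended reals. -/
noncomputable def envU {n m : ℕ}
    (f : EuclideanSpace ℝ (Fin n) → EuclideanSpace ℝ (Fin m) → ℝ)
    (Y : Set (EuclideanSpace ℝ (Fin m))) (ystar : EuclideanSpace ℝ (Fin m)) (ε : ℝ)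
    (x : EuclideanSpace ℝ (Fin n)) : EReal :=
  ⨆ y ∈ {y ∈ Y | ‖y - ystar‖ ≤ ε}, ((f x y : ℝ) : EReal)

/-- `(x*, y*)` is a local minimax point of `f` on `X × Y`. -/
def IsLocalMinimax {n m : ℕ} (X : Set (EuclideanSpace ℝ (Fin n)))
    (Y : Set (EuclideanSpace ℝ (Fin m)))
    (f : EuclideanSpace ℝ (Fin n) → EuclideanSpace ℝ (Fin m) → ℝ)
    (xstar : EuclideanSpace ℝ (Fin n)) (ystar : EuclideanSpace ℝ (Fin m)) : Prop :=
  (∃ ε > (0 : ℝ), ∀ y ∈ Y, ‖y - ystar‖ ≤ ε → f xstar y ≤ f xstar ystar) ∧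
  (∃ εseq : ℕ → ℝ, (∀ k, 0 < εseq k) ∧ Tendsto εseq atTop (nhds 0) ∧
    ∀ k, ∃ δ > (0 : ℝ), ∀ x ∈ X, ‖x - xstar‖ ≤ δ →
      envU f Y ystar (εseq k) xstar ≤ envU f Y ystar (εseq k) x)

def IsLocalMinOnEnvU {n m : ℕ} (X : Set (EuclideanSpace ℝ (Fin n)))
    (Y : Set (EuclideanSpace ℝ (Fin m)))
    (f : EuclideanSpace ℝ (Fin n) → EuclideanSpace ℝ (Fin m) → ℝ)
    (xstar : EuclideanSpace ℝ (Fin n)) (ystar : EuclideanSpace ℝ (Fin m)) (ε : ℝ) : Prop :=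
  ∃ δ > (0 : ℝ), ∀ x ∈ X, ‖x - xstar‖ ≤ δ → envU f Y ystar ε xstar ≤ envU f Y ystar ε x

section

variable {n m : ℕ} {X : Set (EuclideanSpace ℝ (Fin n))} {Y : Set (EuclideanSpace ℝ (Fin m))}
  {f : EuclideanSpace ℝ (Fin n) → EuclideanSpace ℝ (Fin m) → ℝ}
  {xstar : EuclideanSpace ℝ (Fin n)} {ystar : EuclideanSpace ℝ (Fin m)} {ε ε' : ℝ}

theorem envU_mono (h : ε' ≤ ε) (x : EuclideanSpace ℝ (Fin n)) :
    envU f Y ystar ε' x ≤ envU f Y ystar ε x :=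
  biSup_mono fun _ hy => ⟨hy.1, hy.2.trans h⟩

theorem envU_eq_of_forall_le (hyY : ystar ∈ Y) (hε : 0 ≤ ε)
    (hmax : ∀ y ∈ Y, ‖y - ystar‖ ≤ ε → f xstar y ≤ f xstar ystar) :
    envU f Y ystar ε xstar = f xstar ystar :=
  le_antisymm (iSup₂_le fun y hy => EReal.coe_le_coe (hmax y hy.1 hy.2))
    (le_iSup₂_of_le (f := fun y _ => ((f xstar y : ℝ) : EReal)) ystar ⟨hyY, by simpa using hε⟩
      le_rfl)

theorem IsLocalMinOnEnvU.of_le (hmin : IsLocalMinOnEnvU X Y f xstar ystar ε')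
    (hyY : ystar ∈ Y) (hε' : 0 ≤ ε') (hε'ε : ε' ≤ ε)
    (hmax : ∀ y ∈ Y, ‖y - ystar‖ ≤ ε → f xstar y ≤ f xstar ystar) :
    IsLocalMinOnEnvU X Y f xstar ystar ε := by
  obtain ⟨δ, hδ, hle⟩ := hmin
  have hcenter : envU f Y ystar ε xstar = envU f Y ystar ε' xstar := by
    rw [envU_eq_of_forall_le hyY (hε'.trans hε'ε) hmax,
      envU_eq_of_forall_le hyY hε' fun y hy h => hmax y hy (h.trans hε'ε)]
  refine ⟨δ, hδ, fun x hx hxδ => ?_⟩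
  calc envU f Y ystar ε xstar = envU f Y ystar ε' xstar := hcenter
    _ ≤ envU f Y ystar ε' x := hle x hx hxδ
    _ ≤ envU f Y ystar ε x := envU_mono hε'ε x

end

theorem isLocalMinimax_iff_forall_small_eps_general {n m : ℕ}
    (X : Set (EuclideanSpace ℝ (Fin n))) (Y : Set (EuclideanSpace ℝ (Fin m)))
    (f : EuclideanSpace ℝ (Fin n) → EuclideanSpace ℝ (Fin m) → ℝ)
    (xstar : EuclideanSpace ℝ (Fin n)) (ystar : EuclideanSpace ℝ (Fin m))
    (hyY : ystar ∈ Y) :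
    IsLocalMinimax X Y f xstar ystar ↔
      ((∃ ε > (0 : ℝ), ∀ y ∈ Y, ‖y - ystar‖ ≤ ε → f xstar y ≤ f xstar ystar) ∧
       (∃ ε₀ > (0 : ℝ), ∀ ε : ℝ, 0 < ε → ε ≤ ε₀ →
         ∃ δ > (0 : ℝ), ∀ x ∈ X, ‖x - xstar‖ ≤ δ →
           envU f Y ystar ε xstar ≤ envU f Y ystar ε x)) := by
  constructor
  · rintro ⟨⟨ε₁, hε₁, hmax⟩, εseq, hpos, htend, hmin⟩
    refine ⟨⟨ε₁, hε₁, hmax⟩, ε₁, hε₁, fun ε hε hεε₁ => ?_⟩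
    obtain ⟨k, hk⟩ := (htend.eventually (gt_mem_nhds hε)).exists
    exact IsLocalMinOnEnvU.of_le (hmin k) hyY (hpos k).le hk.le
      fun y hy h => hmax y hy (h.trans hεε₁)
  · rintro ⟨hmax, ε₀, hε₀, hmin⟩
    obtain ⟨εseq, -, hseq, htend⟩ := exists_seq_strictAnti_tendsto' hε₀
    exact ⟨hmax, εseq, fun k => (hseq k).1, htend, fun k => hmin _ (hseq k).1 (hseq k).2.le⟩

/-- `(x*, y*)` is local minimax iff `y*` locally maximizes `f(x*, ·)` on `Y` and
there is `ε₀ > 0` such that for every `ε ∈ (0, ε₀]`, `x*` is a local minimizer of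
the envelope `f̄_{ε,y*}` on `X`. -/
theorem isLocalMinimax_iff_forall_small_eps {n m : ℕ}
    (X : Set (EuclideanSpace ℝ (Fin n))) (Y : Set (EuclideanSpace ℝ (Fin m)))
    (hX : X.Nonempty) (hY : Y.Nonempty)
    (f : EuclideanSpace ℝ (Fin n) → EuclideanSpace ℝ (Fin m) → ℝ)
    (xstar : EuclideanSpace ℝ (Fin n)) (ystar : EuclideanSpace ℝ (Fin m))
    (hxX : xstar ∈ X) (hyY : ystar ∈ Y) :
    IsLocalMinimax X Y f xstar ystar ↔
      ((∃ ε > (0 : ℝ), ∀ y ∈ Y, ‖y - ystar‖ ≤ ε → f xstar y ≤ f xstar ystar) ∧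
       (∃ ε₀ > (0 : ℝ), ∀ ε : ℝ, 0 < ε → ε ≤ ε₀ →
         ∃ δ > (0 : ℝ), ∀ x ∈ X, ‖x - xstar‖ ≤ δ →
           envU f Y ystar ε xstar ≤ envU f Y ystar ε x)) :=
  isLocalMinimax_iff_forall_small_eps_general X Y f xstar ystar hyY
end

section
/- Let X ⊆ ℝ^n and Y ⊆ ℝ^m be nonempty and f : ℝ^n × ℝ^m → ℝ. (a) Every local saddle point of f is a uniformly local minimax point of f. (b) If for every x ∈ X the function y ↦ f(x,y) is upper semicontinuous on Y, then every uniformly local minimax point of f is a local saddle point of f. -/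
/-!
A saddle point is minimax because on a small ball the envelope at `x⋆` collapses to
`f(x⋆, y⋆)`, which is below `f(x, y⋆)` and hence below the envelope at `x`. Conversely,
upper semicontinuity of `f(x, ·)` at `y⋆` squeezes the envelopes at `x` down to
`f(x, y⋆)` as `ε → 0`, while the envelopes at `x⋆` never drop below `f(x⋆, y⋆)`; the
uniform `δ` lets the envelope inequality pass to this limit for every `x` near `x⋆`.
-/

open Filter

/-- `(x*, y*)` is a uniformly local minimax point of `f` on `X × Y`: the defining
sequence `(ε_n)` can be chosen together with a single `δ > 0` working for all `n`. -/
def IsUniformlyLocalMinimax {n m : ℕ} (X : Set (EuclideanSpace ℝ (Fin n)))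
    (Y : Set (EuclideanSpace ℝ (Fin m)))
    (f : EuclideanSpace ℝ (Fin n) → EuclideanSpace ℝ (Fin m) → ℝ)
    (xstar : EuclideanSpace ℝ (Fin n)) (ystar : EuclideanSpace ℝ (Fin m)) : Prop :=
  (∃ ε > (0 : ℝ), ∀ y ∈ Y, ‖y - ystar‖ ≤ ε → f xstar y ≤ f xstar ystar) ∧
  (∃ εseq : ℕ → ℝ, (∀ k, 0 < εseq k) ∧ Tendsto εseq atTop (nhds 0) ∧
    ∃ δ > (0 : ℝ), ∀ k, ∀ x ∈ X, ‖x - xstar‖ ≤ δ →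
      envU f Y ystar (εseq k) xstar ≤ envU f Y ystar (εseq k) x)

/-- `(x⋆, y⋆)` is a local saddle point of `f` on `X × Y`. -/
def IsLocalSaddle {n m : ℕ} (X : Set (EuclideanSpace ℝ (Fin n)))
    (Y : Set (EuclideanSpace ℝ (Fin m)))
    (f : EuclideanSpace ℝ (Fin n) → EuclideanSpace ℝ (Fin m) → ℝ)
    (xstar : EuclideanSpace ℝ (Fin n)) (ystar : EuclideanSpace ℝ (Fin m)) : Prop :=
  ∃ ε > (0 : ℝ), ∀ x ∈ X, ‖x - xstar‖ ≤ ε → ∀ y ∈ Y, ‖y - ystar‖ ≤ ε →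
    f xstar y ≤ f xstar ystar ∧ f xstar ystar ≤ f x ystar

open Topology

section envU

variable {n m : ℕ} {f : EuclideanSpace ℝ (Fin n) → EuclideanSpace ℝ (Fin m) → ℝ}
  {Y : Set (EuclideanSpace ℝ (Fin m))} {ystar : EuclideanSpace ℝ (Fin m)}
  {ε : ℝ} {x : EuclideanSpace ℝ (Fin n)}

theorem coe_le_envU (hy : ystar ∈ Y) (hε : 0 ≤ ε) :
    ((f x ystar : ℝ) : EReal) ≤ envU f Y ystar ε x :=
  le_iSup₂_of_le ystar ⟨hy, by simpa using hε⟩ le_rfl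

theorem envU_le_coe {c : ℝ} (h : ∀ y ∈ Y, ‖y - ystar‖ ≤ ε → f x y ≤ c) :
    envU f Y ystar ε x ≤ c :=
  iSup₂_le fun y hy => EReal.coe_le_coe_iff.2 (h y hy.1 hy.2)

theorem UpperSemicontinuousWithinAt.eventually_envU_le
    (husc : UpperSemicontinuousWithinAt (f x) Y ystar) {c : ℝ} (hc : f x ystar < c) :
    ∀ᶠ ε in 𝓝 0, envU f Y ystar ε x ≤ c := by
  obtain ⟨r, hr, hball⟩ := Metric.mem_nhdsWithin_iff.1 (husc c hc)
  filter_upwards [eventually_lt_nhds hr] with ε hε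
  refine envU_le_coe fun y hy hyε => (hball ⟨?_, hy⟩).le
  rw [Metric.mem_ball, dist_eq_norm]
  exact hyε.trans_lt hε

theorem le_of_forall_envU_le {x' : EuclideanSpace ℝ (Fin n)} {εseq : ℕ → ℝ}
    (hy : ystar ∈ Y) (husc : UpperSemicontinuousWithinAt (f x) Y ystar)
    (hpos : ∀ k, 0 ≤ εseq k) (htend : Tendsto εseq atTop (𝓝 0))
    (hle : ∀ k, envU f Y ystar (εseq k) x' ≤ envU f Y ystar (εseq k) x) :
    f x' ystar ≤ f x ystar := by
  refine le_of_forall_gt_imp_ge_of_dense fun c hc => ?_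
  obtain ⟨k, hk⟩ := (htend.eventually (husc.eventually_envU_le hc)).exists
  exact EReal.coe_le_coe_iff.1 ((coe_le_envU hy (hpos k)).trans ((hle k).trans hk))

end envU

section saddle

variable {n m : ℕ} {X : Set (EuclideanSpace ℝ (Fin n))} {Y : Set (EuclideanSpace ℝ (Fin m))}
  {f : EuclideanSpace ℝ (Fin n) → EuclideanSpace ℝ (Fin m) → ℝ}
  {xstar : EuclideanSpace ℝ (Fin n)} {ystar : EuclideanSpace ℝ (Fin m)}

theorem IsLocalSaddle.isUniformlyLocalMinimax (hx : xstar ∈ X) (hy : ystar ∈ Y)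
    (hsad : IsLocalSaddle X Y f xstar ystar) : IsUniformlyLocalMinimax X Y f xstar ystar := by
  obtain ⟨ε, hε, hsad⟩ := hsad
  have hmax : ∀ y ∈ Y, ‖y - ystar‖ ≤ ε → f xstar y ≤ f xstar ystar := fun y hyY hyε =>
    (hsad xstar hx (by simpa using hε.le) y hyY hyε).1
  have hmin : ∀ x ∈ X, ‖x - xstar‖ ≤ ε → f xstar ystar ≤ f x ystar := fun x hxX hxε =>
    (hsad x hxX hxε ystar hy (by simpa using hε.le)).2
  have htend : Tendsto (fun k : ℕ => ε / (k + 1)) atTop (𝓝 0) := by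
    simpa [Function.comp_def] using
      (tendsto_const_div_atTop_nhds_zero_nat ε).comp (tendsto_add_atTop_nat 1)
  refine ⟨⟨ε, hε, hmax⟩, fun k => ε / (k + 1), fun k => by positivity, htend, ε, hε,
    fun k x hxX hxε => ?_⟩
  have hεk : ε / (k + 1) ≤ ε := div_le_self hε.le (by linarith [k.cast_nonneg (α := ℝ)])
  calc envU f Y ystar (ε / (k + 1)) xstar
      ≤ f xstar ystar := envU_le_coe fun y hyY hyε => hmax y hyY (hyε.trans hεk)
    _ ≤ f x ystar := EReal.coe_le_coe_iff.2 (hmin x hxX hxε)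
    _ ≤ envU f Y ystar (ε / (k + 1)) x := coe_le_envU hy (by positivity)

theorem IsUniformlyLocalMinimax.isLocalSaddle (hy : ystar ∈ Y)
    (husc : ∀ x ∈ X, UpperSemicontinuousWithinAt (f x) Y ystar)
    (hmm : IsUniformlyLocalMinimax X Y f xstar ystar) : IsLocalSaddle X Y f xstar ystar := by
  obtain ⟨⟨ε, hε, hmax⟩, εseq, hpos, htend, δ, hδ, hmin⟩ := hmm
  refine ⟨min ε δ, lt_min hε hδ, fun x hxX hxδ y hyY hyε => ⟨?_, ?_⟩⟩
  · exact hmax y hyY (hyε.trans (min_le_left _ _))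
  · exact le_of_forall_envU_le hy (husc x hxX) (fun k => (hpos k).le) htend
      fun k => hmin k x hxX (hxδ.trans (min_le_right _ _))

end saddle

theorem localSaddle_iff_uniformlyLocalMinimax_general {n m : ℕ}
    (X : Set (EuclideanSpace ℝ (Fin n))) (Y : Set (EuclideanSpace ℝ (Fin m)))
    (f : EuclideanSpace ℝ (Fin n) → EuclideanSpace ℝ (Fin m) → ℝ) :
    (∀ xstar ∈ X, ∀ ystar ∈ Y,
        IsLocalSaddle X Y f xstar ystar → IsUniformlyLocalMinimax X Y f xstar ystar) ∧
    ((∀ x ∈ X, UpperSemicontinuousOn (f x) Y) →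
      ∀ xstar ∈ X, ∀ ystar ∈ Y,
        IsUniformlyLocalMinimax X Y f xstar ystar → IsLocalSaddle X Y f xstar ystar) :=
  ⟨fun _ hx _ hy => IsLocalSaddle.isUniformlyLocalMinimax hx hy,
    fun husc _ _ _ hy => IsUniformlyLocalMinimax.isLocalSaddle hy fun x hx => husc x hx _ hy⟩

/-- (a) Every local saddle point is uniformly local minimax.  (b) If `f(x, ·)` is
upper semicontinuous on `Y` for every `x ∈ X`, then every uniformly local minimax
point is a local saddle point. -/
theorem localSaddle_iff_uniformlyLocalMinimax {n m : ℕ}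
    (X : Set (EuclideanSpace ℝ (Fin n))) (Y : Set (EuclideanSpace ℝ (Fin m)))
    (hX : X.Nonempty) (hY : Y.Nonempty)
    (f : EuclideanSpace ℝ (Fin n) → EuclideanSpace ℝ (Fin m) → ℝ) :
    (∀ xstar ∈ X, ∀ ystar ∈ Y,
        IsLocalSaddle X Y f xstar ystar → IsUniformlyLocalMinimax X Y f xstar ystar) ∧
    ((∀ x ∈ X, UpperSemicontinuousOn (f x) Y) →
      ∀ xstar ∈ X, ∀ ystar ∈ Y,
        IsUniformlyLocalMinimax X Y f xstar ystar → IsLocalSaddle X Y f xstar ystar) :=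
  localSaddle_iff_uniformlyLocalMinimax_general X Y f
end

section
/- Let X ⊆ ℝ^n be nonempty and Y ⊆ ℝ^m be nonempty and closed, and let f : ℝ^n × ℝ^m → ℝ be such that f and ∂_x f are (jointly) continuous. Suppose (x*,y*) ∈ X × Y satisfies: (i) there is ε₀' > 0 with f(x*,y) ≤ f(x*,y*) for all y ∈ Y with ‖y − y*‖ ≤ ε₀'; and (ii) there is ε₀ ∈ (0, ε₀'] such that for every ε ∈ (0, ε₀) and every nonzero vector t in the contingent (Bouligand) tangent cone to X at x*, there exists y ∈ Y₀(x*;ε) with ⟨∂_x f(x*,y), t⟩ > 0, where Y₀(x*;ε) := { y ∈ Y : ‖y − y*‖ ≤ ε and f(x*,y) = f̄_{ε,y*}(x*) }. Then (x*,y*) is a local minimax point of f. -/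
/-!
If `x*` were not a local minimizer of `f̄_{ε,y*}` on `X`, there would be points `x_j → x*` of `X`
with `f̄(x_j) < f̄(x*)`; along a subsequence their unit directions converge to some `t ≠ 0` of the
contingent cone. An active `y` for this `t` gives `f(x_j, y) ≤ f̄(x_j) < f̄(x*) = f(x*, y)`, while
`⟪∂ₓ f(x*, y), t⟫ > 0` and the continuity of `∂ₓ f` make `f(·, y)` strictly increase along the
segment from `x*` to `x_j` once `j` is large.
-/

open Filter
open scoped RealInnerProductSpace

/-- The contingent (Bouligand) tangent cone to `X` at `x`. -/
def contingentCone {n : ℕ} (X : Set (EuclideanSpace ℝ (Fin n)))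
    (x : EuclideanSpace ℝ (Fin n)) : Set (EuclideanSpace ℝ (Fin n)) :=
  {t | ∃ α : ℕ → ℝ, ∃ tk : ℕ → EuclideanSpace ℝ (Fin n),
    (∀ k, 0 < α k) ∧ Tendsto α atTop (nhds 0) ∧ Tendsto tk atTop (nhds t) ∧
    ∀ k, x + α k • tk k ∈ X}

/-- Zeroth-order active set `Y₀(x*; ε)`. -/
def activeSet {n m : ℕ}
    (f : EuclideanSpace ℝ (Fin n) → EuclideanSpace ℝ (Fin m) → ℝ)
    (Y : Set (EuclideanSpace ℝ (Fin m)))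
    (xstar : EuclideanSpace ℝ (Fin n)) (ystar : EuclideanSpace ℝ (Fin m)) (ε : ℝ) :
    Set (EuclideanSpace ℝ (Fin m)) :=
  {y ∈ Y | ‖y - ystar‖ ≤ ε ∧ ((f xstar y : ℝ) : EReal) = envU f Y ystar ε xstar}

open Topology

section Gradient

variable {E : Type*} [NormedAddCommGroup E] [InnerProductSpace ℝ E] [CompleteSpace E]

theorem lt_add_of_forall_inner_gradient_pos {h : E → ℝ} {x v : E}
    (hpos : ∀ s ∈ Set.Icc (0 : ℝ) 1, 0 < ⟪gradient h (x + s • v), v⟫) :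
    h x < h (x + v) := by
  have hderiv : ∀ s ∈ Set.Icc (0 : ℝ) 1,
      HasDerivAt (fun s : ℝ => h (x + s • v)) ⟪gradient h (x + s • v), v⟫ s := by
    intro s hs
    -- a non-differentiable point would have zero gradient
    have hdiff : DifferentiableAt ℝ h (x + s • v) := by
      by_contra hnd
      simpa [gradient_eq_zero_of_not_differentiableAt hnd] using hpos s hs
    have hline : HasDerivAt (fun s : ℝ => x + s • v) v s := by
      simpa using ((hasDerivAt_id s).smul_const v).const_add x
    exact hdiff.hasGradientAt.hasFDerivAt.comp_hasDerivAt s hline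
  obtain ⟨c, hc, hslope⟩ := exists_hasDerivAt_eq_slope (fun s : ℝ => h (x + s • v))
    (fun s => ⟪gradient h (x + s • v), v⟫) zero_lt_one
    (fun s hs => (hderiv s hs).continuousAt.continuousWithinAt)
    (fun s hs => hderiv s (Set.Ioo_subset_Icc_self hs))
  have := hpos c (Set.Ioo_subset_Icc_self hc)
  simp only [hslope, zero_smul, add_zero, one_smul, sub_zero, div_one] at this
  linarith

theorem eventually_lt_of_tendsto_direction {h : E → ℝ} {x t : E}
    (hgrad : ContinuousAt (gradient h) x) (ht : 0 < ⟪gradient h x, t⟫)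
    {xs : ℕ → E} (hlim : Tendsto xs atTop (𝓝 x))
    (hdir : Tendsto (fun j => ‖xs j - x‖⁻¹ • (xs j - x)) atTop (𝓝 t)) :
    ∀ᶠ j in atTop, h x < h (xs j) := by
  have hcont : ContinuousAt (fun p : E × E => ⟪gradient h p.1, p.2⟫) (x, t) :=
    (hgrad.comp_of_eq continuousAt_fst rfl).inner continuousAt_snd
  have hnear : ∀ᶠ p : E × E in 𝓝 (x, t), 0 < ⟪gradient h p.1, p.2⟫ :=
    hcont.eventually (lt_mem_nhds ht)
  obtain ⟨r, hr, hball⟩ := Metric.eventually_nhds_iff.mp hnear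
  filter_upwards [Metric.tendsto_nhds.mp hlim r hr, Metric.tendsto_nhds.mp hdir r hr]
    with j hxj hdj
  set v := xs j - x
  have hseg : ∀ s ∈ Set.Icc (0 : ℝ) 1, 0 < ⟪gradient h (x + s • v), ‖v‖⁻¹ • v⟫ := by
    intro s hs
    refine hball (show dist (x + s • v, ‖v‖⁻¹ • v) (x, t) < r from ?_)
    rw [Prod.dist_eq]
    refine max_lt ?_ hdj
    rw [dist_eq_norm] at hxj ⊢
    calc ‖x + s • v - x‖ = s * ‖v‖ := by simp [norm_smul, abs_of_nonneg hs.1]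
      _ ≤ ‖v‖ := mul_le_of_le_one_left (norm_nonneg v) hs.2
      _ < r := hxj
  have hv : v ≠ 0 := by
    rintro hv
    simpa [hv] using hseg 0 ⟨le_rfl, zero_le_one⟩
  have hxv : xs j = x + v := by simp [v]
  rw [hxv]
  refine lt_add_of_forall_inner_gradient_pos fun s hs => ?_
  have := hseg s hs
  rw [real_inner_smul_right] at this
  exact pos_of_mul_pos_right this (inv_nonneg.mpr (norm_nonneg v))

end Gradient

theorem exists_subseq_tendsto_direction_mem_contingentCone {n : ℕ}
    {X : Set (EuclideanSpace ℝ (Fin n))} {x : EuclideanSpace ℝ (Fin n)}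
    {xs : ℕ → EuclideanSpace ℝ (Fin n)} (hX : ∀ j, xs j ∈ X) (hne : ∀ j, xs j ≠ x)
    (hlim : Tendsto xs atTop (𝓝 x)) :
    ∃ t ∈ contingentCone X x, t ≠ 0 ∧ ∃ φ : ℕ → ℕ, StrictMono φ ∧
      Tendsto (fun j => ‖xs (φ j) - x‖⁻¹ • (xs (φ j) - x)) atTop (𝓝 t) := by
  set α : ℕ → ℝ := fun j => ‖xs j - x‖
  have hα : ∀ j, 0 < α j := fun j => norm_pos_iff.2 (sub_ne_zero.2 (hne j))
  have hsphere : ∀ j, (α j)⁻¹ • (xs j - x) ∈ Metric.sphere 0 1 := fun j =>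
    mem_sphere_zero_iff_norm.2 (norm_smul_inv_norm (sub_ne_zero.2 (hne j)))
  obtain ⟨t, ht, φ, hφ, hdir⟩ := (isCompact_sphere _ _).tendsto_subseq hsphere
  refine ⟨t, ⟨α ∘ φ, _, fun j => hα _,
    (tendsto_iff_norm_sub_tendsto_zero.1 hlim).comp hφ.tendsto_atTop, hdir, fun j => ?_⟩,
    Metric.ne_of_mem_sphere ht one_ne_zero, φ, hφ, hdir⟩
  simpa [smul_inv_smul₀ (hα (φ j)).ne'] using hX (φ j)

theorem exists_closedBall_envU_le_of_inner_gradient_pos {n m : ℕ}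
    {X : Set (EuclideanSpace ℝ (Fin n))} {Y : Set (EuclideanSpace ℝ (Fin m))}
    {f : EuclideanSpace ℝ (Fin n) → EuclideanSpace ℝ (Fin m) → ℝ}
    {xstar : EuclideanSpace ℝ (Fin n)} {ystar : EuclideanSpace ℝ (Fin m)} {ε : ℝ}
    (hgrad : ∀ y ∈ Y, ContinuousAt (gradient (fun x' => f x' y)) xstar)
    (hpos : ∀ t ∈ contingentCone X xstar, t ≠ 0 →
      ∃ y ∈ activeSet f Y xstar ystar ε, 0 < ⟪gradient (fun x' => f x' y) xstar, t⟫) :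
    ∃ δ > (0 : ℝ), ∀ x ∈ X, ‖x - xstar‖ ≤ δ →
      envU f Y ystar ε xstar ≤ envU f Y ystar ε x := by
  by_contra! hcon
  choose xs hxsX hxsd hxslt using fun j : ℕ => hcon (1 / ((j : ℝ) + 1)) Nat.one_div_pos_of_nat
  have hlim : Tendsto xs atTop (𝓝 xstar) := tendsto_iff_norm_sub_tendsto_zero.2 <|
    squeeze_zero (fun _ => norm_nonneg _) hxsd tendsto_one_div_add_atTop_nhds_zero_nat
  obtain ⟨t, ht, ht0, φ, hφ, hdir⟩ := exists_subseq_tendsto_direction_mem_contingentCone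
    hxsX (fun j hj => (hj ▸ hxslt j).false) hlim
  obtain ⟨y, ⟨hyY, hyd, hyenv⟩, hy⟩ := hpos t ht ht0
  obtain ⟨j, hj⟩ := (eventually_lt_of_tendsto_direction (hgrad y hyY) hy
    (hlim.comp hφ.tendsto_atTop) hdir).exists
  have hlt : ((f (xs (φ j)) y : ℝ) : EReal) < f xstar y :=
    calc ((f (xs (φ j)) y : ℝ) : EReal) ≤ envU f Y ystar ε (xs (φ j)) :=
          le_iSup₂_of_le (f := fun y (_ : y ∈ {y ∈ Y | ‖y - ystar‖ ≤ ε}) =>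
            ((f (xs (φ j)) y : ℝ) : EReal)) y ⟨hyY, hyd⟩ le_rfl
      _ < envU f Y ystar ε xstar := hxslt (φ j)
      _ = f xstar y := hyenv.symm
  exact (EReal.coe_lt_coe_iff.1 hlt).asymm hj

theorem localMinimax_of_firstOrder_sufficient_general {n m : ℕ}
    (X : Set (EuclideanSpace ℝ (Fin n))) (Y : Set (EuclideanSpace ℝ (Fin m)))
    (f : EuclideanSpace ℝ (Fin n) → EuclideanSpace ℝ (Fin m) → ℝ)
    (hgradc : Continuous (fun p : EuclideanSpace ℝ (Fin n) × EuclideanSpace ℝ (Fin m) =>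
      gradient (fun x' => f x' p.2) p.1))
    (xstar : EuclideanSpace ℝ (Fin n)) (ystar : EuclideanSpace ℝ (Fin m))
    (ε₀' : ℝ) (hε₀' : 0 < ε₀')
    (hmax : ∀ y ∈ Y, ‖y - ystar‖ ≤ ε₀' → f xstar y ≤ f xstar ystar)
    (ε₀ : ℝ) (hε₀pos : 0 < ε₀)
    (hpos : ∀ ε : ℝ, 0 < ε → ε < ε₀ →
      ∀ t ∈ contingentCone X xstar, t ≠ 0 →
        ∃ y ∈ activeSet f Y xstar ystar ε, 0 < ⟪gradient (fun x' => f x' y) xstar, t⟫) :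
    IsLocalMinimax X Y f xstar ystar := by
  refine ⟨⟨ε₀', hε₀', hmax⟩, fun k => ε₀ / ((k : ℝ) + 2), fun k => by positivity,
    tendsto_const_nhds.div_atTop (tendsto_atTop_add_const_right _ _ tendsto_natCast_atTop_atTop),
    fun k => ?_⟩
  have hgrad : ∀ y ∈ Y, ContinuousAt (gradient (fun x' => f x' y)) xstar := fun y _ =>
    (hgradc.comp (Continuous.prodMk_left y)).continuousAt
  exact exists_closedBall_envU_le_of_inner_gradient_pos hgrad
    (hpos _ (by positivity) (div_lt_self hε₀pos (by linarith [k.cast_nonneg (α := ℝ)])))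

/-- First-order sufficient condition for a local minimax point. -/
theorem localMinimax_of_firstOrder_sufficient {n m : ℕ}
    (X : Set (EuclideanSpace ℝ (Fin n))) (Y : Set (EuclideanSpace ℝ (Fin m)))
    (hXne : X.Nonempty) (hYne : Y.Nonempty) (hYc : IsClosed Y)
    (f : EuclideanSpace ℝ (Fin n) → EuclideanSpace ℝ (Fin m) → ℝ)
    (hfc : Continuous (fun p : EuclideanSpace ℝ (Fin n) × EuclideanSpace ℝ (Fin m) => f p.1 p.2))
    (hgradc : Continuous (fun p : EuclideanSpace ℝ (Fin n) × EuclideanSpace ℝ (Fin m) =>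
      gradient (fun x' => f x' p.2) p.1))
    (xstar : EuclideanSpace ℝ (Fin n)) (ystar : EuclideanSpace ℝ (Fin m))
    (hxX : xstar ∈ X) (hyY : ystar ∈ Y)
    (ε₀' : ℝ) (hε₀' : 0 < ε₀')
    (hmax : ∀ y ∈ Y, ‖y - ystar‖ ≤ ε₀' → f xstar y ≤ f xstar ystar)
    (ε₀ : ℝ) (hε₀pos : 0 < ε₀) (hε₀le : ε₀ ≤ ε₀')
    (hpos : ∀ ε : ℝ, 0 < ε → ε < ε₀ →
      ∀ t ∈ contingentCone X xstar, t ≠ 0 →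
        ∃ y ∈ activeSet f Y xstar ystar ε, 0 < ⟪gradient (fun x' => f x' y) xstar, t⟫) :
    IsLocalMinimax X Y f xstar ystar :=
  localMinimax_of_firstOrder_sufficient_general X Y f hgradc xstar ystar ε₀' hε₀' hmax ε₀ hε₀pos
    hpos
end
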